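/- arXiv:1412.7624 — 4 statements merged into one kernel-verified Lean document; each statement's English description precedes it below -/
import Mathlib

section
/- The CF rate R_CF(S₂) = (1/2)log₂(1+S₁) + (1/2)log₂(1 + S₁ + tS₁S₂/(1+(t+1)S₁+S₂)) is concave on S₂ ∈ [0, ∞). -/
/-! Writing `t S₁ S₂ / (c + S₂) = t S₁ - t S₁ c / (c + S₂)` with `c = 1 + (t + 1) S₁ > 0` shows that
the argument of the second logarithm is a constant minus a positive multiple of the convex function
`S₂ ↦ 1 / (c + S₂)`, hence concave and positive on `[0, ∞)`. Composing with the concave, increasing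
function `logb 2` preserves concavity. -/

open Real Set

theorem ConcaveOn.comp_of_mapsTo {𝕜 E α β : Type*} [Semiring 𝕜] [PartialOrder 𝕜]
    [AddCommMonoid E] [AddCommMonoid α] [PartialOrder α] [AddCommMonoid β] [PartialOrder β]
    [SMul 𝕜 E] [SMul 𝕜 α] [SMul 𝕜 β] {s : Set E} {T : Set β} {f : E → β} {g : β → α}
    (hg : ConcaveOn 𝕜 T g) (hg_mono : MonotoneOn g T) (hf : ConcaveOn 𝕜 s f)
    (hfT : MapsTo f s T) : ConcaveOn 𝕜 s (g ∘ f) :=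
  ⟨hf.1, fun _ hx _ hy _ _ ha hb hab =>
    (hg.2 (hfT hx) (hfT hy) ha hb hab).trans <|
      hg_mono (hg.1 (hfT hx) (hfT hy) ha hb hab) (hfT (hf.1 hx hy ha hb hab))
        (hf.2 hx hy ha hb hab)⟩

theorem concaveOn_logb_Ioi {b : ℝ} (hb : 1 ≤ b) : ConcaveOn ℝ (Ioi 0) (logb b) := by
  have h := strictConcaveOn_log_Ioi.concaveOn.smul (inv_nonneg.2 (log_nonneg hb))
  refine h.congr fun x _ => ?_
  simp only [smul_eq_mul, logb, inv_mul_eq_div]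

theorem convexOn_inv_add (c : ℝ) : ConvexOn ℝ (Ioi (-c)) fun x : ℝ => (c + x)⁻¹ := by
  have h : ConvexOn ℝ (Ioi 0) fun x : ℝ => x⁻¹ := by
    simpa only [zpow_neg_one] using convexOn_zpow (𝕜 := ℝ) (-1)
  have h' := h.translate_right c
  rwa [preimage_const_add_Ioi, zero_sub] at h'

theorem concaveOn_mul_div_add {a c : ℝ} (ha : 0 ≤ a) (hc : 0 ≤ c) :
    ConcaveOn ℝ (Ioi (-c)) fun x : ℝ => a * x / (c + x) := by
  have h := (concaveOn_const a (convex_Ioi (-c))).sub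
    ((convexOn_inv_add c).smul (mul_nonneg ha hc))
  refine h.congr fun x hx => ?_
  have hx : c + x ≠ 0 := (show 0 < c + x by linarith [mem_Ioi.1 hx]).ne'
  simp only [Pi.sub_apply, smul_eq_mul]
  field_simp
  ring

theorem RCF_concave (S₁ t : ℝ) (hS₁ : 0 < S₁) (ht : 0 < t) :
    ConcaveOn ℝ (Set.Ici 0)
      (fun S₂ : ℝ => (1/2) * Real.logb 2 (1 + S₁)
        + (1/2) * Real.logb 2 (1 + S₁ + t * S₁ * S₂ / (1 + (t + 1) * S₁ + S₂))) := by
  have hinner : ConcaveOn ℝ (Ici 0)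
      fun S₂ : ℝ => 1 + S₁ + t * S₁ * S₂ / (1 + (t + 1) * S₁ + S₂) :=
    (concaveOn_const _ (convex_Ici 0)).add <|
      (concaveOn_mul_div_add (by positivity) (by positivity)).subset
        (Ici_subset_Ioi.2 (by linarith [mul_pos (add_pos ht one_pos) hS₁])) (convex_Ici 0)
  have hinner_pos : MapsTo (fun S₂ : ℝ => 1 + S₁ + t * S₁ * S₂ / (1 + (t + 1) * S₁ + S₂))
      (Ici 0) (Ioi 0) := fun S₂ hS₂ => by
    have : 0 ≤ S₂ := hS₂
    simp only [mem_Ioi]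
    positivity
  have hlog := (concaveOn_logb_Ioi one_le_two).comp_of_mapsTo
    (strictMonoOn_logb one_lt_two).monotoneOn hinner hinner_pos
  exact (concaveOn_const _ (convex_Ici 0)).add (hlog.smul (by norm_num))
end

section
/- For t > S₁ + 2 (equivalently t − η > 1), the condition ρ* > 1 is equivalent to S₂ < S₁(√(t−η) − 1)², where ρ* = (√(S₂+η(tS₁−S₁−S₂)) − √S₂)/(η√S₁) and η = (1+tS₁)/(1+S₁). -/
theorem rho_star_gt_one_iff (S₁ S₂ t : ℝ) (hS₁ : 0 < S₁) (hS₂ : 0 < S₂) (ht : t > S₁ + 2) :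
    let η := (1 + t * S₁) / (1 + S₁)
    let ρstar := (Real.sqrt (S₂ + η * (t * S₁ - S₁ - S₂)) - Real.sqrt S₂) / (η * Real.sqrt S₁)
    ρstar > 1 ↔ S₂ < S₁ * (Real.sqrt (t - η) - 1) ^ 2 := by
  intro η ρstar
  have hηdef : η = (1 + t * S₁) / (1 + S₁) := rfl
  have h1S : (0:ℝ) < 1 + S₁ := by linarith
  have hη1 : 1 < η := by rw [hηdef, lt_div_iff₀ h1S]; nlinarith
  have hη : 0 < η := lt_trans one_pos hη1
  have hte : 1 < t - η := by
    have h : t - η = (t - 1) / (1 + S₁) := by rw [hηdef]; field_simp; ring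
    rw [h, lt_div_iff₀ h1S]; nlinarith
  set a := Real.sqrt S₁ with ha
  set b := Real.sqrt S₂ with hb
  set c := Real.sqrt (t - η) with hc
  have ha0 : 0 < a := Real.sqrt_pos.2 hS₁
  have hb0 : 0 < b := Real.sqrt_pos.2 hS₂
  have ha2 : a ^ 2 = S₁ := Real.sq_sqrt hS₁.le
  have hb2 : b ^ 2 = S₂ := Real.sq_sqrt hS₂.le
  have hc2 : c ^ 2 = t - η := Real.sq_sqrt (by linarith)
  have hc1 : 1 < c := by
    rw [hc, show (1:ℝ) = Real.sqrt 1 from (Real.sqrt_one).symm]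
    exact Real.sqrt_lt_sqrt zero_le_one hte
  have hpos : 0 < η * a := by positivity
  have hnn : (0:ℝ) ≤ η * a + b := by positivity
  have hρdef : ρstar = (Real.sqrt (S₂ + η * (t * S₁ - S₁ - S₂)) - b) / (η * a) := rfl
  have key : S₂ + η * (t * S₁ - S₁ - S₂) - (η * a + b) ^ 2
      = η * ((a * c) ^ 2 - (a + b) ^ 2) := by
    linear_combination (η - η * t) * ha2 + (η - 1) * hb2 - η * a ^ 2 * hc2
  have hL : ρstar > 1 ↔ a + b < a * c := by
    constructor
    · intro hρ
      rw [hρdef, gt_iff_lt, lt_div_iff₀ hpos] at hρ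
      have h1 : η * a + b < Real.sqrt (S₂ + η * (t * S₁ - S₁ - S₂)) := by linarith
      have h2 := (Real.lt_sqrt hnn).1 h1
      have hd : 0 < η * ((a * c) ^ 2 - (a + b) ^ 2) := by linarith
      have h3 : (a + b) ^ 2 < (a * c) ^ 2 := by nlinarith [hd, hη]
      exact lt_of_pow_lt_pow_left₀ 2 (by positivity) h3
    · intro h
      have h3 : (a + b) ^ 2 < (a * c) ^ 2 := pow_lt_pow_left₀ h (by positivity) two_ne_zero
      have h2 : (η * a + b) ^ 2 < S₂ + η * (t * S₁ - S₁ - S₂) := by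
        nlinarith [mul_pos hη (sub_pos.2 h3)]
      have h1 := (Real.lt_sqrt hnn).2 h2
      rw [hρdef, gt_iff_lt, lt_div_iff₀ hpos]
      linarith
  have hR : S₂ < S₁ * (c - 1) ^ 2 ↔ a + b < a * c := by
    constructor
    · intro h
      nlinarith [ha2, hb2, mul_pos ha0 (sub_pos.2 hc1), hb0, h]
    · intro h
      nlinarith [ha2, hb2, hb0, h, mul_pos ha0 (sub_pos.2 hc1)]
  rw [hL, hR]
end

section
/- For t > 1 the DF rate is eventually constant: for all S₂ ≥ (t−1)S₁, R_DF(S₂) = (1/2)log₂(1+S₁) + (1/2)log₂(1+tS₁). -/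
/-! For every correlation `ρ ∈ [0, 1]` the first (broadcast) term of the minimum is at most its
value at `ρ = 0`, namely `log(1 + tS₁) + log(1 + S₁)`. Once `S₂ ≥ (t - 1)S₁`, the second
(multiple-access) term at `ρ = 0`, `log(1 + S₁) + log(1 + S₁ + S₂)`, is at least that much, so
`ρ = 0` attains the supremum. -/

open Real

theorem ciSup_min_eq_of_forall_le {ι α : Type*} [ConditionallyCompleteLinearOrder α]
    {f g : ι → α} (i₀ : ι) (hf : ∀ i, f i ≤ f i₀) (hg : f i₀ ≤ g i₀) :
    ⨆ i, min (f i) (g i) = f i₀ := by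
  have : Nonempty ι := ⟨i₀⟩
  refine le_antisymm (ciSup_le fun i => (min_le_left _ _).trans (hf i)) ?_
  have hbdd : BddAbove (Set.range fun i => min (f i) (g i)) :=
    ⟨f i₀, by rintro _ ⟨i, rfl⟩; exact (min_le_left _ _).trans (hf i)⟩
  simpa only [min_eq_left hg] using le_ciSup hbdd i₀

theorem logb_one_add_one_sub_sq_mul_le {b ρ S : ℝ} (hb : 1 < b)
    (hρ : ρ ∈ Set.Icc (0 : ℝ) 1) (hS : 0 ≤ S) :
    logb b (1 + (1 - ρ ^ 2) * S) ≤ logb b (1 + S) := by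
  obtain ⟨hρ₀, hρ₁⟩ := hρ
  have hρsq : ρ ^ 2 ≤ 1 := pow_le_one₀ hρ₀ hρ₁
  apply logb_le_logb_of_le hb <;> nlinarith [sq_nonneg ρ]

theorem logb_add_logb_le_of_mul_le {b S₁ S₂ t : ℝ} (hb : 1 < b) (hS₁ : 0 < S₁) (ht : 0 < t)
    (hS₂ : (t - 1) * S₁ ≤ S₂) :
    logb b (1 + t * S₁) + logb b (1 + S₁) ≤ logb b (1 + S₁) + logb b (1 + S₁ + S₂) := by
  have : 1 + t * S₁ ≤ 1 + S₁ + S₂ := by linarith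
  linarith [logb_le_logb_of_le hb (by positivity) this]

theorem RDF_eventually_constant (S₁ t : ℝ) (hS₁ : 0 < S₁) (ht : 1 < t) :
    let R_DF : ℝ → ℝ := fun S₂ => (1/2) *
      ⨆ ρ : Set.Icc (0:ℝ) 1,
        min (Real.logb 2 (1 + t * S₁) + Real.logb 2 (1 + (1 - (ρ:ℝ) ^ 2) * S₁))
          (Real.logb 2 (1 + S₁)
            + Real.logb 2 (1 + S₁ + S₂ + 2 * (ρ:ℝ) * Real.sqrt (S₁ * S₂)))
    ∀ S₂ : ℝ, (t - 1) * S₁ ≤ S₂ →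
      R_DF S₂ = (1/2) * Real.logb 2 (1 + S₁) + (1/2) * Real.logb 2 (1 + t * S₁) := by
  intro R_DF S₂ hS₂
  have hb : (1 : ℝ) < 2 := one_lt_two
  let ρ₀ : Set.Icc (0 : ℝ) 1 := ⟨0, Set.left_mem_Icc.mpr zero_le_one⟩
  have hsup := ciSup_min_eq_of_forall_le
    (f := fun ρ : Set.Icc (0 : ℝ) 1 => logb 2 (1 + t * S₁) + logb 2 (1 + (1 - (ρ : ℝ) ^ 2) * S₁))
    (g := fun ρ : Set.Icc (0 : ℝ) 1 =>
      logb 2 (1 + S₁) + logb 2 (1 + S₁ + S₂ + 2 * (ρ : ℝ) * √(S₁ * S₂)))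
    ρ₀
    (fun ρ => by simpa [ρ₀] using logb_one_add_one_sub_sq_mul_le hb ρ.2 hS₁.le)
    (by simpa [ρ₀] using logb_add_logb_le_of_mul_le hb hS₁ (by linarith) hS₂)
  simp only [R_DF, hsup, ρ₀]
  norm_num
  ring
end

section
/- The function R_DF(S₂) = (1/2)·max_{ρ∈[0,1]} min{log₂(1+tS₁)+log₂(1+(1−ρ²)S₁), log₂(1+S₁)+log₂(1+S₁+S₂+2ρ√(S₁S₂))} is nondecreasing and concave in S₂ on [0, ∞). -/
set_option maxHeartbeats 1000000

open Real Set

private lemma sq_le_one_aux {x : ℝ} (h0 : 0 ≤ x) (h1 : x ≤ 1) : x ^ 2 ≤ 1 := by nlinarith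

private lemma logb2_concave_aux {x y θ μ : ℝ} (hx : 0 < x) (hy : 0 < y)
    (hθ : 0 ≤ θ) (hμ : 0 ≤ μ) (hθμ : θ + μ = 1) :
    θ * Real.logb 2 x + μ * Real.logb 2 y ≤ Real.logb 2 (θ * x + μ * y) := by
  have h := strictConcaveOn_log_Ioi.concaveOn.2 (mem_Ioi.2 hx) (mem_Ioi.2 hy) hθ hμ hθμ
  simp only [smul_eq_mul] at h
  have hl2 : 0 < Real.log 2 := Real.log_pos (by norm_num)
  unfold Real.logb
  rw [show θ * (Real.log x / Real.log 2) + μ * (Real.log y / Real.log 2)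
      = (θ * Real.log x + μ * Real.log y) / Real.log 2 by ring]
  gcongr

/-- Cauchy–Schwarz for two weighted terms. -/
private lemma cs_aux {θ μ ρa ρb a b : ℝ} (hθ : 0 ≤ θ) (hμ : 0 ≤ μ)
    (ha : 0 ≤ a) (hb : 0 ≤ b) :
    θ * ρa * Real.sqrt a + μ * ρb * Real.sqrt b
      ≤ Real.sqrt (θ * ρa ^ 2 + μ * ρb ^ 2) * Real.sqrt (θ * a + μ * b) := by
  have hin : 0 ≤ θ * ρa ^ 2 + μ * ρb ^ 2 := by positivity
  rw [← Real.sqrt_mul hin]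
  rcases le_or_gt (θ * ρa * Real.sqrt a + μ * ρb * Real.sqrt b) 0 with h | h
  · exact le_trans h (Real.sqrt_nonneg _)
  · rw [show θ * ρa * Real.sqrt a + μ * ρb * Real.sqrt b
        = Real.sqrt ((θ * ρa * Real.sqrt a + μ * ρb * Real.sqrt b) ^ 2) from
      (Real.sqrt_sq h.le).symm]
    apply Real.sqrt_le_sqrt
    set sa := Real.sqrt a with hsadef
    set sb := Real.sqrt b with hsbdef
    rw [show a = sa ^ 2 from (Real.sq_sqrt ha).symm,
      show b = sb ^ 2 from (Real.sq_sqrt hb).symm]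
    nlinarith [mul_nonneg (mul_nonneg hθ hμ) (sq_nonneg (ρa * sb - ρb * sa))]

noncomputable def fAux (S₁ t ρ S₂ : ℝ) : ℝ :=
  min (Real.logb 2 (1 + t * S₁) + Real.logb 2 (1 + (1 - ρ ^ 2) * S₁))
    (Real.logb 2 (1 + S₁) + Real.logb 2 (1 + S₁ + S₂ + 2 * ρ * Real.sqrt (S₁ * S₂)))

noncomputable def gAux (S₁ t S₂ : ℝ) : ℝ := ⨆ ρ : Set.Icc (0:ℝ) 1, fAux S₁ t (ρ:ℝ) S₂

section
variable {S₁ t : ℝ} (hS₁ : 0 < S₁)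


private lemma harg (hS₁ : 0 < S₁) {ρ S₂ : ℝ} (hρ : 0 ≤ ρ) (hS₂ : 0 ≤ S₂) :
    (0:ℝ) < 1 + S₁ + S₂ + 2 * ρ * Real.sqrt (S₁ * S₂) := by
  have h1 := Real.sqrt_nonneg (S₁ * S₂)
  nlinarith [mul_nonneg hρ h1]

include hS₁ in
private lemma fAux_bdd (S₂ : ℝ) :
    BddAbove (Set.range fun ρ : Set.Icc (0:ℝ) 1 => fAux S₁ t (ρ:ℝ) S₂) := by
  refine ⟨Real.logb 2 (1 + t * S₁) + Real.logb 2 (1 + S₁), ?_⟩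
  rintro x ⟨ρ, rfl⟩
  refine le_trans (min_le_left _ _) ?_
  have hρ2 : (ρ:ℝ) ^ 2 ≤ 1 := sq_le_one_aux ρ.2.1 ρ.2.2
  have hle : (1:ℝ) + (1 - (ρ:ℝ) ^ 2) * S₁ ≤ 1 + S₁ := by nlinarith [sq_nonneg (ρ:ℝ)]
  have hpos : (0:ℝ) < 1 + (1 - (ρ:ℝ) ^ 2) * S₁ := by nlinarith
  have := Real.logb_le_logb_of_le (b := 2) (by norm_num) hpos hle
  linarith

include hS₁ in
private lemma fAux_mono {ρ : ℝ} (hρ : ρ ∈ Icc (0:ℝ) 1) {a b : ℝ} (ha : 0 ≤ a)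
    (hab : a ≤ b) : fAux S₁ t ρ a ≤ fAux S₁ t ρ b := by
  refine min_le_min le_rfl ?_
  have hsq : Real.sqrt (S₁ * a) ≤ Real.sqrt (S₁ * b) :=
    Real.sqrt_le_sqrt (by nlinarith [hS₁.le])
  have hargle : 1 + S₁ + a + 2 * ρ * Real.sqrt (S₁ * a)
      ≤ 1 + S₁ + b + 2 * ρ * Real.sqrt (S₁ * b) := by nlinarith [hρ.1]
  have := Real.logb_le_logb_of_le (b := 2) (by norm_num) (harg hS₁ hρ.1 ha) hargle
  linarith

include hS₁ in
private lemma gAux_mono : MonotoneOn (gAux S₁ t) (Set.Ici 0) := by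
  have hne : Nonempty (Set.Icc (0:ℝ) 1) := ⟨⟨0, by norm_num, by norm_num⟩⟩
  intro a ha b hb hab
  refine ciSup_le fun ρ => ?_
  exact le_trans (fAux_mono hS₁ ρ.2 ha hab) (le_ciSup (fAux_bdd hS₁ b) ρ)

include hS₁ in
/-- The combined correlation point beats the convex combination. -/
private lemma fAux_combine {θ μ a b : ℝ} (hθ : 0 ≤ θ) (hμ : 0 ≤ μ) (hθμ : θ + μ = 1)
    (ha : 0 ≤ a) (hb : 0 ≤ b) (ρa ρb : Set.Icc (0:ℝ) 1) :
    θ * fAux S₁ t (ρa:ℝ) a + μ * fAux S₁ t (ρb:ℝ) b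
      ≤ fAux S₁ t (Real.sqrt (θ * (ρa:ℝ) ^ 2 + μ * (ρb:ℝ) ^ 2)) (θ * a + μ * b) := by
  obtain ⟨ρ, hρdef⟩ : ∃ ρ : ℝ, ρ = Real.sqrt (θ * (ρa:ℝ) ^ 2 + μ * (ρb:ℝ) ^ 2) := ⟨_, rfl⟩
  rw [← hρdef]
  have hρa0 := ρa.2.1; have hρa1 := ρa.2.2
  have hρb0 := ρb.2.1; have hρb1 := ρb.2.2
  have hin : 0 ≤ θ * (ρa:ℝ) ^ 2 + μ * (ρb:ℝ) ^ 2 := by positivity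
  have hρsq : ρ ^ 2 = θ * (ρa:ℝ) ^ 2 + μ * (ρb:ℝ) ^ 2 := by
    rw [hρdef]; exact Real.sq_sqrt hin
  have hsa2 : (ρa:ℝ) ^ 2 ≤ 1 := sq_le_one_aux hρa0 hρa1
  have hsb2 : (ρb:ℝ) ^ 2 ≤ 1 := sq_le_one_aux hρb0 hρb1
  -- A part
  have hApos_a : (0:ℝ) < 1 + (1 - (ρa:ℝ) ^ 2) * S₁ := by nlinarith
  have hApos_b : (0:ℝ) < 1 + (1 - (ρb:ℝ) ^ 2) * S₁ := by nlinarith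
  have hA : θ * Real.logb 2 (1 + (1 - (ρa:ℝ) ^ 2) * S₁)
      + μ * Real.logb 2 (1 + (1 - (ρb:ℝ) ^ 2) * S₁)
      ≤ Real.logb 2 (1 + (1 - ρ ^ 2) * S₁) := by
    have h1 := logb2_concave_aux hApos_a hApos_b hθ hμ hθμ
    have heq : θ * (1 + (1 - (ρa:ℝ) ^ 2) * S₁) + μ * (1 + (1 - (ρb:ℝ) ^ 2) * S₁)
        = 1 + (1 - ρ ^ 2) * S₁ := by rw [hρsq]; linear_combination (1 + S₁) * hθμ
    rwa [heq] at h1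
  -- B part
  have hBpos_a := harg (S₁ := S₁) hS₁ hρa0 ha
  have hBpos_b := harg (S₁ := S₁) hS₁ hρb0 hb
  have hCS := cs_aux (ρa := (ρa:ℝ)) (ρb := (ρb:ℝ)) hθ hμ ha hb
  have hB : θ * Real.logb 2 (1 + S₁ + a + 2 * (ρa:ℝ) * Real.sqrt (S₁ * a))
      + μ * Real.logb 2 (1 + S₁ + b + 2 * (ρb:ℝ) * Real.sqrt (S₁ * b))
      ≤ Real.logb 2 (1 + S₁ + (θ * a + μ * b)
          + 2 * ρ * Real.sqrt (S₁ * (θ * a + μ * b))) := by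
    refine le_trans (logb2_concave_aux hBpos_a hBpos_b hθ hμ hθμ) ?_
    apply Real.logb_le_logb_of_le (b := 2) (by norm_num)
    · have hX1 : (1:ℝ) ≤ 1 + S₁ + a + 2 * (ρa:ℝ) * Real.sqrt (S₁ * a) := by
        nlinarith [mul_nonneg hρa0 (Real.sqrt_nonneg (S₁ * a))]
      have hY1 : (1:ℝ) ≤ 1 + S₁ + b + 2 * (ρb:ℝ) * Real.sqrt (S₁ * b) := by
        nlinarith [mul_nonneg hρb0 (Real.sqrt_nonneg (S₁ * b))]
      nlinarith [mul_le_mul_of_nonneg_left hX1 hθ, mul_le_mul_of_nonneg_left hY1 hμ]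
    · have hsa : Real.sqrt (S₁ * a) = Real.sqrt S₁ * Real.sqrt a := Real.sqrt_mul hS₁.le a
      have hsb : Real.sqrt (S₁ * b) = Real.sqrt S₁ * Real.sqrt b := Real.sqrt_mul hS₁.le b
      have hsc : Real.sqrt (S₁ * (θ * a + μ * b))
          = Real.sqrt S₁ * Real.sqrt (θ * a + μ * b) := Real.sqrt_mul hS₁.le _
      rw [hsa, hsb, hsc]
      have hs1 : 0 ≤ Real.sqrt S₁ := Real.sqrt_nonneg _
      have hCS' : θ * (ρa:ℝ) * Real.sqrt a + μ * (ρb:ℝ) * Real.sqrt b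
          ≤ ρ * Real.sqrt (θ * a + μ * b) := by rw [hρdef]; exact hCS
      nlinarith [mul_le_mul_of_nonneg_left hCS' hs1, hθμ]
  unfold fAux
  refine le_min ?_ ?_
  · refine le_trans (add_le_add
      (mul_le_mul_of_nonneg_left (min_le_left _ _) hθ)
      (mul_le_mul_of_nonneg_left (min_le_left _ _) hμ)) ?_
    have hL : θ * Real.logb 2 (1 + t * S₁) + μ * Real.logb 2 (1 + t * S₁)
        = Real.logb 2 (1 + t * S₁) := by rw [← add_mul, hθμ, one_mul]
    linarith [hA, hL]
  · refine le_trans (add_le_add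
      (mul_le_mul_of_nonneg_left (min_le_right _ _) hθ)
      (mul_le_mul_of_nonneg_left (min_le_right _ _) hμ)) ?_
    have hL : θ * Real.logb 2 (1 + S₁) + μ * Real.logb 2 (1 + S₁)
        = Real.logb 2 (1 + S₁) := by rw [← add_mul, hθμ, one_mul]
    linarith [hB, hL]

include hS₁ in
private lemma gAux_concave : ConcaveOn ℝ (Set.Ici 0) (gAux S₁ t) := by
  have hne : Nonempty (Set.Icc (0:ℝ) 1) := ⟨⟨0, by norm_num, by norm_num⟩⟩
  refine ⟨convex_Ici 0, ?_⟩
  intro a ha b hb θ μ hθ hμ hθμ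
  simp only [smul_eq_mul]
  refine le_of_forall_pos_le_add fun ε hε => ?_
  obtain ⟨ρa, hρa⟩ := exists_lt_of_lt_ciSup
    (show gAux S₁ t a - ε < gAux S₁ t a by linarith)
  obtain ⟨ρb, hρb⟩ := exists_lt_of_lt_ciSup
    (show gAux S₁ t b - ε < gAux S₁ t b by linarith)
  have hkey := fAux_combine (t := t) hS₁ hθ hμ hθμ (mem_Ici.1 ha) (mem_Ici.1 hb) ρa ρb
  have hρ0 : 0 ≤ Real.sqrt (θ * (ρa:ℝ) ^ 2 + μ * (ρb:ℝ) ^ 2) := Real.sqrt_nonneg _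
  have hρ1 : Real.sqrt (θ * (ρa:ℝ) ^ 2 + μ * (ρb:ℝ) ^ 2) ≤ 1 := by
    have e1 : θ * (ρa:ℝ) ^ 2 ≤ θ * 1 :=
      mul_le_mul_of_nonneg_left (sq_le_one_aux ρa.2.1 ρa.2.2) hθ
    have e2 : μ * (ρb:ℝ) ^ 2 ≤ μ * 1 :=
      mul_le_mul_of_nonneg_left (sq_le_one_aux ρb.2.1 ρb.2.2) hμ
    calc Real.sqrt (θ * (ρa:ℝ) ^ 2 + μ * (ρb:ℝ) ^ 2) ≤ Real.sqrt 1 :=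
          Real.sqrt_le_sqrt (by linarith)
      _ = 1 := Real.sqrt_one
  have hle : fAux S₁ t (Real.sqrt (θ * (ρa:ℝ) ^ 2 + μ * (ρb:ℝ) ^ 2)) (θ * a + μ * b)
      ≤ gAux S₁ t (θ * a + μ * b) :=
    le_ciSup (fAux_bdd hS₁ _) (⟨_, hρ0, hρ1⟩ : Set.Icc (0:ℝ) 1)
  have h1 : θ * gAux S₁ t a ≤ θ * (fAux S₁ t (ρa:ℝ) a + ε) :=
    mul_le_mul_of_nonneg_left (by linarith) hθ
  have h2 : μ * gAux S₁ t b ≤ μ * (fAux S₁ t (ρb:ℝ) b + ε) :=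
    mul_le_mul_of_nonneg_left (by linarith) hμ
  nlinarith [hθμ, hkey, hle]

end

theorem RDF_monotone_concave (S₁ t : ℝ) (hS₁ : 0 < S₁) (ht : 0 < t) :
    let R_DF : ℝ → ℝ := fun S₂ => (1/2) *
      ⨆ ρ : Set.Icc (0:ℝ) 1,
        min (Real.logb 2 (1 + t * S₁) + Real.logb 2 (1 + (1 - (ρ:ℝ) ^ 2) * S₁))
          (Real.logb 2 (1 + S₁)
            + Real.logb 2 (1 + S₁ + S₂ + 2 * (ρ:ℝ) * Real.sqrt (S₁ * S₂)))
    MonotoneOn R_DF (Set.Ici 0) ∧ ConcaveOn ℝ (Set.Ici 0) R_DF := by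
  intro R_DF
  have hRg : R_DF = fun S₂ => (1/2 : ℝ) * gAux S₁ t S₂ := rfl
  constructor
  · intro a ha b hb hab
    rw [hRg]
    have := gAux_mono (t := t) hS₁ ha hb hab
    dsimp only
    linarith
  · rw [hRg, show (fun S₂ => (1/2 : ℝ) * gAux S₁ t S₂) = (1/2 : ℝ) • gAux S₁ t by
      funext x; simp [smul_eq_mul]]
    exact (gAux_concave hS₁).smul (by norm_num)
end
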